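/- Under the Volterra equation hypotheses and H*(n) → ∞, if t^H_n ∈ {1,…,n} satisfies |H(t^H_n)| = max_{1≤j≤n} |H(j)|, then lim_{n→∞} |x(t^H_n)| / |H(t^H_n)| = 1. -/

import Mathlib

/-!
Write `K = ∑ |k j|`. Sublinearity of `f` gives `|f y| ≤ ε |y| + C_ε` for every `ε > 0`, so
`|x (n+1) - H (n+1)| ≤ K (ε max_{j ≤ n} |x j| + C_ε)`. With `K ε ≤ 1/2` this bounds the running
maximum of `|x|` by `A + 2 H*`; feeding that back in with `ε` arbitrary shows that
`x (n+1) - H (n+1) = o(H*(n+1))`. At the times `t n` we have `|H (t n)| = H*(n) → ∞`, so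
`x ∘ t ~ H ∘ t`.
-/

open Filter Finset Topology

/-- Running maximum of `g` over `{1,…,n}` (value `0` when `n = 0`). -/
noncomputable def runMax1 (g : ℕ → ℝ) (n : ℕ) : ℝ :=
  if h : 1 ≤ n then (Finset.Icc 1 n).sup' (Finset.nonempty_Icc.mpr h) g else 0

/-- Running maximum of `g` over `{0,…,n}`. -/
noncomputable def runMax0 (g : ℕ → ℝ) (n : ℕ) : ℝ :=
  (Finset.Icc 0 n).sup' (Finset.nonempty_Icc.mpr (Nat.zero_le n)) g

open Asymptotics

lemma le_runMax0 (g : ℕ → ℝ) {j n : ℕ} (h : j ≤ n) : g j ≤ runMax0 g n :=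
  Finset.le_sup' g (Finset.mem_Icc.mpr ⟨Nat.zero_le _, h⟩)

lemma runMax0_le (g : ℕ → ℝ) {n : ℕ} {a : ℝ} (h : ∀ j ≤ n, g j ≤ a) : runMax0 g n ≤ a :=
  Finset.sup'_le _ _ fun j hj => h j (Finset.mem_Icc.mp hj).2

lemma runMax0_succ_le (g : ℕ → ℝ) {n : ℕ} {a : ℝ} (hn : runMax0 g n ≤ a) (hsucc : g (n + 1) ≤ a) :
    runMax0 g (n + 1) ≤ a :=
  runMax0_le g fun _ hj => (Nat.le_succ_iff.mp hj).elim
    (fun hjn => (le_runMax0 g hjn).trans hn) (fun hj => hj ▸ hsucc)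

lemma le_runMax1 (g : ℕ → ℝ) {j n : ℕ} (h1 : 1 ≤ j) (h : j ≤ n) : g j ≤ runMax1 g n := by
  rw [runMax1, dif_pos (h1.trans h)]
  exact Finset.le_sup' g (Finset.mem_Icc.mpr ⟨h1, h⟩)

lemma runMax1_nonneg {g : ℕ → ℝ} (hg : 0 ≤ g) (n : ℕ) : 0 ≤ runMax1 g n := by
  rw [runMax1]
  split_ifs with h
  · exact (hg 1).trans (Finset.le_sup' g (Finset.mem_Icc.mpr ⟨le_rfl, h⟩))
  · exact le_rfl

lemma runMax1_mono {g : ℕ → ℝ} (hg : 0 ≤ g) : Monotone (runMax1 g) := by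
  intro m n hmn
  rw [runMax1]
  split_ifs with hm
  · exact Finset.sup'_le _ _ fun j hj =>
      le_runMax1 g (Finset.mem_Icc.mp hj).1 ((Finset.mem_Icc.mp hj).2.trans hmn)
  · exact runMax1_nonneg hg n

lemma Asymptotics.isLittleO_of_forall_eventually_le_mul_add {α E F : Type*} [Norm E] [Norm F]
    {l : Filter α} {u : α → E} {w : α → F} (hw : Tendsto (fun a => ‖w a‖) l atTop)
    (h : ∀ ε > 0, ∃ D, ∀ᶠ a in l, ‖u a‖ ≤ ε * ‖w a‖ + D) : u =o[l] w := by
  refine IsLittleO.of_bound fun c hc => ?_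
  obtain ⟨D, hD⟩ := h (c / 2) (half_pos hc)
  filter_upwards [hD, hw.eventually_ge_atTop (2 * D / c)] with a hua hwa
  have : D ≤ c / 2 * ‖w a‖ := by
    rw [div_le_iff₀ hc] at hwa
    linarith
  linarith

lemma Continuous.exists_abs_le_add_of_eventually_cocompact {X : Type*} [TopologicalSpace X]
    {f g : X → ℝ} (hf : Continuous f) (hg : ∀ y, 0 ≤ g y) (h : ∀ᶠ y in cocompact X, |f y| ≤ g y) :
    ∃ C, 0 ≤ C ∧ ∀ y, |f y| ≤ g y + C := by
  obtain ⟨s, hs, hsc⟩ := mem_cocompact.mp h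
  obtain ⟨C, hC⟩ := hs.exists_bound_of_continuousOn hf.continuousOn
  refine ⟨max C 0, le_max_right _ _, fun y => ?_⟩
  by_cases hy : y ∈ s
  · have := hC y hy
    rw [Real.norm_eq_abs] at this
    linarith [hg y, le_max_left C 0]
  · have : |f y| ≤ g y := hsc hy
    linarith [le_max_right C 0]

lemma exists_abs_le_mul_abs_add_of_tendsto_div {f : ℝ → ℝ} (hf : Continuous f)
    (hsub : Tendsto (fun y => f y / y) (cocompact ℝ) (𝓝 0)) {ε : ℝ} (hε : 0 < ε) :
    ∃ C, 0 ≤ C ∧ ∀ y, |f y| ≤ ε * |y| + C := by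
  have hne : ∀ᶠ y in cocompact ℝ, y ≠ 0 := cocompact_le_cofinite (eventually_cofinite_ne 0)
  have hlo : f =o[cocompact ℝ] id :=
    (isLittleO_iff_tendsto' (hne.mono fun y hy h0 => absurd h0 hy)).mpr hsub
  refine hf.exists_abs_le_add_of_eventually_cocompact (fun y => by positivity) ?_
  simpa only [Real.norm_eq_abs, id] using hlo.bound hε

lemma sum_range_abs_sub_le_tsum {k : ℕ → ℝ} (hk : Summable fun j => |k j|) (n : ℕ) :
    ∑ j ∈ range (n + 1), |k (n - j)| ≤ ∑' j, |k j| := by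
  have := sum_range_reflect (fun j => |k j|) (n + 1)
  simp only [add_tsub_cancel_right] at this
  rw [this]
  exact hk.sum_le_tsum _ fun j _ => abs_nonneg _

section Volterra

variable {f : ℝ → ℝ} {k H x : ℕ → ℝ}

lemma abs_sub_forcing_le (hk : Summable fun j => |k j|)
    (hx : ∀ n, x (n + 1) = H (n + 1) + ∑ j ∈ range (n + 1), k (n - j) * f (x j))
    {ε C : ℝ} (hε : 0 ≤ ε) (hfb : ∀ y, |f y| ≤ ε * |y| + C) (n : ℕ) :
    |x (n + 1) - H (n + 1)| ≤ (∑' j, |k j|) * (ε * runMax0 (fun j => |x j|) n + C) := by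
  set B := ε * runMax0 (fun j => |x j|) n + C
  have hfx : ∀ j ≤ n, |f (x j)| ≤ B := fun j hj =>
    (hfb (x j)).trans (by simp only [B]; gcongr; exact le_runMax0 (fun j => |x j|) hj)
  have hB : 0 ≤ B := (abs_nonneg _).trans (hfx 0 n.zero_le)
  rw [hx n, add_sub_cancel_left]
  calc |∑ j ∈ range (n + 1), k (n - j) * f (x j)|
      ≤ ∑ j ∈ range (n + 1), |k (n - j)| * B := by
        refine (abs_sum_le_sum_abs _ _).trans (sum_le_sum fun j hj => ?_)
        rw [abs_mul]
        exact mul_le_mul_of_nonneg_left (hfx j (Nat.lt_succ_iff.mp (mem_range.mp hj)))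
          (abs_nonneg _)
    _ = (∑ j ∈ range (n + 1), |k (n - j)|) * B := (sum_mul _ _ _).symm
    _ ≤ (∑' j, |k j|) * B := mul_le_mul_of_nonneg_right (sum_range_abs_sub_le_tsum hk n) hB

lemma exists_runMax0_abs_le (hf : Continuous f)
    (hsub : Tendsto (fun y => f y / y) (cocompact ℝ) (𝓝 0)) (hk : Summable fun j => |k j|)
    (hx : ∀ n, x (n + 1) = H (n + 1) + ∑ j ∈ range (n + 1), k (n - j) * f (x j)) :
    ∃ A, ∀ n, runMax0 (fun j => |x j|) n ≤ A + 2 * runMax1 (fun j => |H j|) n := by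
  set K := ∑' j, |k j|
  have hK : 0 ≤ K := tsum_nonneg fun j => abs_nonneg _
  set ε := 1 / (2 * (K + 1))
  have hKε : K * ε ≤ 1 / 2 := by
    rw [mul_one_div, div_le_div_iff₀ (by positivity) two_pos]
    linarith
  obtain ⟨C, hC, hfb⟩ := exists_abs_le_mul_abs_add_of_tendsto_div hf hsub (ε := ε) (by positivity)
  have hH0 : 0 ≤ fun j => |H j| := fun j => abs_nonneg _
  refine ⟨2 * |x 0| + 2 * K * C, fun n => ?_⟩
  induction n with
  | zero =>
    refine runMax0_le _ fun j hj => ?_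
    rw [Nat.le_zero.mp hj]
    nlinarith [runMax1_nonneg hH0 0, abs_nonneg (x 0)]
  | succ n ih =>
    have hHn := runMax1_mono hH0 (n.le_add_right 1)
    refine runMax0_succ_le _ (by linarith) ?_
    have hM := (abs_nonneg (x 0)).trans (le_runMax0 (fun j => |x j|) n.zero_le)
    have hxH : |x (n + 1) - H (n + 1)| ≤ runMax0 (fun j => |x j|) n / 2 + K * C :=
      (abs_sub_forcing_le hk hx (by positivity) hfb n).trans
        (by nlinarith [mul_le_mul_of_nonneg_right hKε hM])
    have hHle := le_runMax1 (fun j => |H j|) (j := n + 1) (by omega) le_rfl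
    have := abs_sub_abs_le_abs_sub (x (n + 1)) (H (n + 1))
    linarith [abs_nonneg (x 0)]

lemma exists_abs_sub_forcing_le_mul_runMax1_add (hf : Continuous f)
    (hsub : Tendsto (fun y => f y / y) (cocompact ℝ) (𝓝 0)) (hk : Summable fun j => |k j|)
    (hx : ∀ n, x (n + 1) = H (n + 1) + ∑ j ∈ range (n + 1), k (n - j) * f (x j))
    {ε : ℝ} (hε : 0 < ε) :
    ∃ D, ∀ n, |x (n + 1) - H (n + 1)| ≤ ε * runMax1 (fun j => |H j|) (n + 1) + D := by
  obtain ⟨A, hA⟩ := exists_runMax0_abs_le hf hsub hk hx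
  set K := ∑' j, |k j|
  have hK : 0 ≤ K := tsum_nonneg fun j => abs_nonneg _
  set ε' := ε / (2 * (K + 1))
  have hε' : 0 < ε' := by positivity
  have hKε' : 2 * K * ε' ≤ ε := by
    rw [show 2 * K * ε' = K / (K + 1) * ε by simp only [ε']; field_simp]
    exact mul_le_of_le_one_left hε.le ((div_le_one (by positivity)).mpr (by linarith))
  obtain ⟨C, -, hfb⟩ := exists_abs_le_mul_abs_add_of_tendsto_div hf hsub hε'
  refine ⟨K * (ε' * A + C), fun n => ?_⟩
  have hHn := runMax1_mono (fun j => abs_nonneg (H j)) (n.le_add_right 1)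
  have hHpos := runMax1_nonneg (fun j => abs_nonneg (H j)) n
  calc |x (n + 1) - H (n + 1)|
      ≤ K * (ε' * runMax0 (fun j => |x j|) n + C) := abs_sub_forcing_le hk hx hε'.le hfb n
    _ ≤ K * (ε' * (A + 2 * runMax1 (fun j => |H j|) n) + C) := by gcongr; exact hA n
    _ = 2 * K * ε' * runMax1 (fun j => |H j|) n + K * (ε' * A + C) := by ring
    _ ≤ ε * runMax1 (fun j => |H j|) (n + 1) + K * (ε' * A + C) := by gcongr

end Volterra

theorem stmt6_general
(f : ℝ → ℝ) (k H x : ℕ → ℝ)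
    (hf : Continuous f)
    (hsub : Filter.Tendsto (fun y => f y / y) (Filter.cocompact ℝ) (nhds 0))
    (hk : Summable (fun j => |k j|))
    (hx : ∀ n : ℕ, x (n + 1) = H (n + 1) + ∑ j ∈ Finset.range (n + 1), k (n - j) * f (x j))
    (hH : Filter.Tendsto (fun n => runMax1 (fun j => |H j|) n) Filter.atTop Filter.atTop)
    (t : ℕ → ℕ)
    (ht : ∀ n : ℕ, 1 ≤ n → 1 ≤ t n ∧ t n ≤ n ∧ |H (t n)| = runMax1 (fun j => |H j|) n) :
    Filter.Tendsto (fun n => |x (t n)| / |H (t n)|) Filter.atTop (nhds 1) := by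
  have hw : Tendsto (fun n => ‖H (t n)‖) atTop atTop :=
    hH.congr' (eventually_atTop.mpr ⟨1, fun n hn => (ht n hn).2.2.symm⟩)
  have hequiv : (fun n => x (t n)) ~[atTop] fun n => H (t n) :=
    isLittleO_of_forall_eventually_le_mul_add hw fun ε hε => by
      obtain ⟨D, hD⟩ := exists_abs_sub_forcing_le_mul_runMax1_add hf hsub hk hx hε
      refine ⟨D, eventually_atTop.mpr ⟨1, fun n hn => ?_⟩⟩
      obtain ⟨htpos, htn, hHt⟩ := ht n hn
      obtain ⟨m, hm⟩ : ∃ m, t n = m + 1 := ⟨t n - 1, by omega⟩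
      rw [hm] at htn hHt
      simp only [Pi.sub_apply, hm, Real.norm_eq_abs, hHt]
      exact (hD m).trans (by gcongr; exact runMax1_mono (fun j => abs_nonneg (H j)) htn)
  have hne : ∀ᶠ n in atTop, H (t n) ≠ 0 := (hw.eventually_gt_atTop 0).mono fun n h => norm_pos_iff.mp h
  simpa only [Pi.div_apply, abs_div, abs_one] using ((isEquivalent_iff_tendsto_one hne).mp hequiv).abs

theorem stmt6
(f : ℝ → ℝ) (k H x : ℕ → ℝ) (ξ : ℝ)
    (hf : Continuous f)
    (hsub : Filter.Tendsto (fun y => f y / y) (Filter.cocompact ℝ) (nhds 0))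
    (hk : Summable (fun j => |k j|))
    (hx0 : x 0 = ξ)
    (hx : ∀ n : ℕ, x (n + 1) = H (n + 1) + ∑ j ∈ Finset.range (n + 1), k (n - j) * f (x j))
    (hH : Filter.Tendsto (fun n => runMax1 (fun j => |H j|) n) Filter.atTop Filter.atTop)
    (t : ℕ → ℕ)
    (ht : ∀ n : ℕ, 1 ≤ n → 1 ≤ t n ∧ t n ≤ n ∧ |H (t n)| = runMax1 (fun j => |H j|) n) :
    Filter.Tendsto (fun n => |x (t n)| / |H (t n)|) Filter.atTop (nhds 1) :=
  stmt6_general f k H x hf hsub hk hx hH t ht
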